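/- arXiv:2202.11212 — 3 statements merged into one kernel-verified Lean document; each statement's English description precedes it below -/
import Mathlib

section
/- For any real numbers t_0 ≥ t_1 > 0 with t_0 > t_1 (so the maximum exponent is attained exactly once among two), there exist constants c_1, c_2 > 0 such that for all real g ≥ 2, the sum over pairs (a_1, a_2) of positive integers with a_1^{t_0} · a_2^{t_1} ≥ g of the product 1/(a_1(a_1+1)) · 1/(a_2(a_2+1)) lies between c_1 · g^{-1/t_0} and c_2 · g^{-1/t_0}. -/
/-!
The weight `1 / (a (a + 1))` telescopes, so its tail over `a ≥ A` is exactly `1 / A`, and the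
`a` with `a ^ t ≥ x` weigh at most `x ^ (-1 / t)`.

Lower bound: every pair with `a₁ ≥ ⌈g ^ (1 / t₀)⌉` qualifies, which already gives
`1 / ⌈g ^ (1 / t₀)⌉ ≥ g ^ (-1 / t₀) / 2`. Upper bound: for fixed `a₂ = b` the condition reads
`a₁ ^ t₀ ≥ g / b ^ t₁`, so that fibre weighs at most `g ^ (-1 / t₀) b ^ (t₁ / t₀) / (b (b + 1))`,
and these bounds are summable over `b` because `t₁ / t₀ < 1`.
-/

open Filter Topology

lemma hasSum_sub_succ_of_antitone {f : ℕ → ℝ} {l : ℝ} (hf : Antitone f)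
    (hl : Tendsto f atTop (𝓝 l)) : HasSum (fun n => f n - f (n + 1)) (f 0 - l) := by
  rw [hasSum_iff_tendsto_nat_of_nonneg fun n => sub_nonneg.2 (hf n.le_succ)]
  simp_rw [Finset.sum_range_sub']
  exact tendsto_const_nhds.sub hl

lemma tsum_le_tsum_of_tsum_fiber_le {α β : Type*} {f : α × β → ℝ} {u : β → ℝ}
    (hf : Summable f) (hu : Summable u) (hfu : ∀ b, ∑' a, f (a, b) ≤ u b) :
    ∑' p, f p ≤ ∑' b, u b := by
  rw [← (Equiv.prodComm β α).tsum_eq]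
  simp only [Equiv.prodComm_apply]
  rw [hf.prod_symm.tsum_prod]
  exact Summable.tsum_le_tsum hfu hf.prod_symm.prod hu

lemma le_rpow_iff_ceil_rpow_inv_le {t x : ℝ} (ht : 0 < t) (hx : 0 ≤ x) (a : ℕ) :
    x ≤ (a : ℝ) ^ t ↔ ⌈x ^ t⁻¹⌉₊ ≤ a := by
  rw [Nat.ceil_le, Real.rpow_inv_le_iff_of_pos hx a.cast_nonneg ht]

noncomputable def invMulSucc (a : ℕ+) : ℝ := 1 / ((a : ℝ) * ((a : ℝ) + 1))

lemma invMulSucc_pos (a : ℕ+) : 0 < invMulSucc a := by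
  unfold invMulSucc; positivity

lemma invMulSucc_eq_sub (a : ℕ+) : invMulSucc a = 1 / (a : ℝ) - 1 / ((a : ℝ) + 1) := by
  have : (0 : ℝ) < a := by positivity
  unfold invMulSucc
  field_simp
  ring

lemma invMulSucc_le_rpow_neg_two (a : ℕ+) : invMulSucc a ≤ (a : ℝ) ^ (-2 : ℝ) := by
  have ha : (0 : ℝ) < a := by positivity
  rw [Real.rpow_neg ha.le, Real.rpow_two, invMulSucc, one_div]
  gcongr
  nlinarith

lemma hasSum_invMulSucc_tail {A : ℕ} (hA : 0 < A) :
    HasSum (fun a : ℕ+ => if A ≤ (a : ℕ) then invMulSucc a else 0) (1 / (A : ℝ)) := by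
  let ι : ℕ → ℕ+ := fun n => ⟨A + n, by omega⟩
  have hι : Function.Injective ι := fun m n h => by simpa [ι] using congrArg PNat.val h
  have hrange : ∀ a ∉ Set.range ι, (if A ≤ (a : ℕ) then invMulSucc a else 0) = 0 := by
    intro a ha
    refine if_neg fun hle => ha ⟨a - A, PNat.eq ?_⟩
    show A + (a - A) = (a : ℕ)
    omega
  rw [← hι.hasSum_iff hrange]
  have hA' : (0 : ℝ) < A := by exact_mod_cast hA
  have hanti : Antitone fun n : ℕ => 1 / ((A : ℝ) + n) := fun m n hmn => by
    dsimp only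
    gcongr
  convert hasSum_sub_succ_of_antitone hanti
    (tendsto_const_nhds.div_atTop (tendsto_atTop_add_const_left _ _ tendsto_natCast_atTop_atTop))
    using 1
  · ext n
    have hιn : (ι n : ℕ) = A + n := rfl
    rw [Function.comp_apply, hιn, if_pos (Nat.le_add_right A n), invMulSucc_eq_sub, hιn]
    push_cast
    ring
  · simp

lemma hasSum_invMulSucc : HasSum invMulSucc 1 := by
  convert hasSum_invMulSucc_tail one_pos using 1
  · exact funext fun a => (if_pos a.pos).symm
  · simp

lemma summable_rpow_mul_invMulSucc {s : ℝ} (hs : s < 1) :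
    Summable fun b : ℕ+ => (b : ℝ) ^ s * invMulSucc b := by
  have hdom : Summable fun b : ℕ+ => (b : ℝ) ^ (s - 2) :=
    (Real.summable_nat_rpow.2 (by linarith)).comp_injective PNat.coe_injective
  refine hdom.of_nonneg_of_le (fun b => (mul_pos (by positivity) (invMulSucc_pos b)).le)
    fun b => ?_
  rw [sub_eq_add_neg, Real.rpow_add (by positivity)]
  exact mul_le_mul_of_nonneg_left (invMulSucc_le_rpow_neg_two b) (by positivity)

lemma tsum_invMulSucc_rpow_tail_le {t x : ℝ} (ht : 0 < t) (hx : 0 < x) :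
    ∑' a : ℕ+, (if x ≤ (a : ℝ) ^ t then invMulSucc a else 0) ≤ x ^ (-t⁻¹) := by
  have hy : 0 < x ^ t⁻¹ := by positivity
  simp_rw [le_rpow_iff_ceil_rpow_inv_le ht hx.le]
  rw [(hasSum_invMulSucc_tail (Nat.ceil_pos.2 hy)).tsum_eq, Real.rpow_neg hx.le]
  exact (one_div_le_one_div_of_le hy (Nat.le_ceil _)).trans_eq (one_div _)

noncomputable def pairTailTerm (t0 t1 g : ℝ) (p : ℕ+ × ℕ+) : ℝ :=
  if g ≤ (p.1 : ℝ) ^ t0 * (p.2 : ℝ) ^ t1 then invMulSucc p.1 * invMulSucc p.2 else 0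

section pairTailTerm

variable {t0 t1 g : ℝ}

lemma pairTailTerm_nonneg (p : ℕ+ × ℕ+) : 0 ≤ pairTailTerm t0 t1 g p := by
  unfold pairTailTerm
  split_ifs
  exacts [(mul_pos (invMulSucc_pos _) (invMulSucc_pos _)).le, le_rfl]

lemma summable_pairTailTerm : Summable (pairTailTerm t0 t1 g) := by
  refine (hasSum_invMulSucc.summable.mul_of_nonneg hasSum_invMulSucc.summable
    (fun a => (invMulSucc_pos a).le) fun a => (invMulSucc_pos a).le).of_nonneg_of_le
    pairTailTerm_nonneg fun p => ?_
  unfold pairTailTerm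
  split_ifs
  exacts [le_rfl, (mul_pos (invMulSucc_pos _) (invMulSucc_pos _)).le]

lemma one_half_mul_rpow_le_tsum_pairTailTerm (ht0 : 0 < t0) (ht1 : 0 ≤ t1) (hg : 1 ≤ g) :
    1 / 2 * g ^ (-t0⁻¹) ≤ ∑' p, pairTailTerm t0 t1 g p := by
  set y := g ^ t0⁻¹
  have hy : 1 ≤ y := Real.one_le_rpow hg (by positivity)
  have hA : 0 < ⌈y⌉₊ := Nat.ceil_pos.2 (by linarith)
  set tail := fun a : ℕ+ => if ⌈y⌉₊ ≤ (a : ℕ) then invMulSucc a else 0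
  have htail := hasSum_invMulSucc_tail hA
  have htail_nonneg : 0 ≤ tail := fun a => by
    dsimp only [tail]; split_ifs
    exacts [(invMulSucc_pos a).le, le_rfl]
  have hsub : ∀ p : ℕ+ × ℕ+, tail p.1 * invMulSucc p.2 ≤ pairTailTerm t0 t1 g p := fun p => by
    by_cases h : ⌈y⌉₊ ≤ (p.1 : ℕ)
    · have hp : g ≤ (p.1 : ℝ) ^ t0 * (p.2 : ℝ) ^ t1 :=
        ((le_rpow_iff_ceil_rpow_inv_le ht0 (by linarith) _).2 h).trans
          (le_mul_of_one_le_right (by positivity)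
            (Real.one_le_rpow (by exact_mod_cast p.2.pos) ht1))
      simp only [tail, pairTailTerm, if_pos h, if_pos hp, le_rfl]
    · simp only [tail, if_neg h, zero_mul]
      exact pairTailTerm_nonneg p
  have hprod := htail.mul hasSum_invMulSucc (htail.summable.mul_of_nonneg
    hasSum_invMulSucc.summable htail_nonneg fun a => (invMulSucc_pos a).le)
  have hceil : (⌈y⌉₊ : ℝ) ≤ 2 * y := by linarith [Nat.ceil_lt_add_one (zero_le_one.trans hy)]
  calc 1 / 2 * g ^ (-t0⁻¹) = 1 / (2 * y) := by
        rw [Real.rpow_neg (by linarith)]; ring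
    _ ≤ 1 / ⌈y⌉₊ * 1 := by rw [mul_one]; exact one_div_le_one_div_of_le (by positivity) hceil
    _ ≤ ∑' p, pairTailTerm t0 t1 g p :=
        hprod.tsum_eq ▸ hprod.summable.tsum_le_tsum hsub summable_pairTailTerm

lemma tsum_pairTailTerm_fiber_le (ht0 : 0 < t0) (hg : 0 < g) (b : ℕ+) :
    ∑' a, pairTailTerm t0 t1 g (a, b) ≤ (b : ℝ) ^ (t1 / t0) * invMulSucc b * g ^ (-t0⁻¹) := by
  have hb : (0 : ℝ) < b := by positivity
  have hbt : (0 : ℝ) < (b : ℝ) ^ t1 := by positivity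
  have hfiber : ∀ a : ℕ+, pairTailTerm t0 t1 g (a, b) =
      (if g / (b : ℝ) ^ t1 ≤ (a : ℝ) ^ t0 then invMulSucc a else 0) * invMulSucc b := fun a => by
    simp only [pairTailTerm, div_le_iff₀ hbt, ite_mul, zero_mul]
  have hscale : (g / (b : ℝ) ^ t1) ^ (-t0⁻¹) = (b : ℝ) ^ (t1 / t0) * g ^ (-t0⁻¹) := by
    rw [Real.div_rpow hg.le hbt.le, ← Real.rpow_mul hb.le, mul_neg, Real.rpow_neg hb.le,
      div_inv_eq_mul, mul_comm, div_eq_mul_inv t1]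
  rw [tsum_congr hfiber, tsum_mul_right, mul_right_comm, ← hscale]
  exact mul_le_mul_of_nonneg_right (tsum_invMulSucc_rpow_tail_le ht0 (by positivity))
    (invMulSucc_pos b).le

lemma tsum_pairTailTerm_le (ht0 : 0 < t0) (ht : t1 < t0) (hg : 0 < g) :
    ∑' p, pairTailTerm t0 t1 g p ≤
      (∑' b : ℕ+, (b : ℝ) ^ (t1 / t0) * invMulSucc b) * g ^ (-t0⁻¹) := by
  rw [← tsum_mul_right]
  exact tsum_le_tsum_of_tsum_fiber_le summable_pairTailTerm
    ((summable_rpow_mul_invMulSucc ((div_lt_one ht0).2 ht)).mul_right _)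
    (tsum_pairTailTerm_fiber_le ht0 hg)

end pairTailTerm

theorem stmt_0 (t0 t1 : ℝ) (ht1 : 0 < t1) (ht : t1 < t0) :
    ∃ c1 c2 : ℝ, 0 < c1 ∧ 0 < c2 ∧ ∀ g : ℝ, 2 ≤ g →
      c1 * g ^ (-(1 / t0)) ≤
        (∑' p : ℕ+ × ℕ+, if g ≤ ((p.1 : ℝ)) ^ t0 * ((p.2 : ℝ)) ^ t1 then
            1 / ((p.1 : ℝ) * ((p.1 : ℝ) + 1)) * (1 / ((p.2 : ℝ) * ((p.2 : ℝ) + 1))) else 0) ∧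
      (∑' p : ℕ+ × ℕ+, if g ≤ ((p.1 : ℝ)) ^ t0 * ((p.2 : ℝ)) ^ t1 then
            1 / ((p.1 : ℝ) * ((p.1 : ℝ) + 1)) * (1 / ((p.2 : ℝ) * ((p.2 : ℝ) + 1))) else 0)
          ≤ c2 * g ^ (-(1 / t0)) := by
  have ht0 : 0 < t0 := ht1.trans ht
  simp only [one_div t0]
  refine ⟨1 / 2, ∑' b : ℕ+, (b : ℝ) ^ (t1 / t0) * invMulSucc b, one_half_pos, ?_,
    fun g hg => ⟨?_, ?_⟩⟩
  · exact (summable_rpow_mul_invMulSucc ((div_lt_one ht0).2 ht)).tsum_pos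
      (fun b => (mul_pos (by positivity) (invMulSucc_pos b)).le) 1
      (mul_pos (by positivity) (invMulSucc_pos 1))
  · exact one_half_mul_rpow_le_tsum_pairTailTerm ht0 ht1.le (by linarith)
  · exact tsum_pairTailTerm_le ht0 ht (by linarith)
end

section
/- For any real t > 0, there exist constants c_1, c_2 > 0 such that for all real g ≥ 2, the sum over pairs (a_1, a_2) of positive integers with a_1^t · a_2^t ≥ g of 1/(a_1(a_1+1)) · 1/(a_2(a_2+1)) lies between c_1 · (log g) · g^{-1/t} and c_2 · (log g) · g^{-1/t}. -/
/-!
Put `G = g ^ (1 / t)`; the condition becomes `a * b ≥ G`. The tail `∑_{b ≥ m} 1 / (b (b + 1))`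
telescopes to `1 / m`, so the inner sum over `b` is `1 / ⌈G / a⌉`, and the double sum equals
`∑_a 1 / (a (a + 1) ⌈G / a⌉)`. For `a ≤ G` this term lies between `1 / (4 G a)` and `1 / (G a)`,
while the terms with `a > G` add up to at most `1 / G`. Hence the sum is comparable to
`H_⌊G⌋ / G ≍ log G / G = log g * g ^ (-1 / t) / t`.
-/

open scoped BigOperators

open Real Finset Filter Topology

/-- Since `1 / 0 = 0`, `oneDivMulSucc 0 = 0`: sums over `ℕ+` may be taken over `ℕ`. -/
noncomputable def oneDivMulSucc (n : ℕ) : ℝ := 1 / (n * (n + 1))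

@[simp] lemma oneDivMulSucc_zero : oneDivMulSucc 0 = 0 := by simp [oneDivMulSucc]

lemma oneDivMulSucc_nonneg (n : ℕ) : 0 ≤ oneDivMulSucc n := by
  unfold oneDivMulSucc; positivity

lemma oneDivMulSucc_eq_sub {n : ℕ} (hn : n ≠ 0) :
    oneDivMulSucc n = 1 / n - 1 / (n + 1 : ℝ) := by
  unfold oneDivMulSucc
  field_simp
  ring

lemma hasSum_oneDivMulSucc_nat_add {m : ℕ} (hm : m ≠ 0) :
    HasSum (fun k ↦ oneDivMulSucc (k + m)) (1 / m) := by
  have partial_sum (N : ℕ) :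
      ∑ k ∈ range N, oneDivMulSucc (k + m) = 1 / m - 1 / ((N + m : ℕ) : ℝ) := by
    induction N with
    | zero => simp
    | succ N ih =>
      rw [sum_range_succ, ih, oneDivMulSucc_eq_sub (by omega)]
      push_cast
      ring
  rw [hasSum_iff_tendsto_nat_of_nonneg (fun k ↦ oneDivMulSucc_nonneg _), funext partial_sum]
  have : Tendsto (fun N : ℕ ↦ 1 / ((N + m : ℕ) : ℝ)) atTop (𝓝 0) :=
    tendsto_one_div_atTop_nhds_zero_nat.comp (tendsto_add_atTop_nat m)
  simpa using this.const_sub (1 / (m : ℝ))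

lemma hasSum_oneDivMulSucc : HasSum oneDivMulSucc 1 := by
  refine (hasSum_nat_add_iff' 1).mp ?_
  simpa using hasSum_oneDivMulSucc_nat_add one_ne_zero

lemma tsum_ite_le_oneDivMulSucc {m : ℕ} (hm : m ≠ 0) :
    ∑' n, (if m ≤ n then oneDivMulSucc n else 0) = 1 / m := by
  refine ((hasSum_nat_add_iff' m).mp ?_).tsum_eq
  have h := hasSum_oneDivMulSucc_nat_add hm
  simp only [le_add_iff_nonneg_left, zero_le, if_true]
  rwa [sum_eq_zero fun i hi ↦ if_neg (by simpa using hi), sub_zero]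

noncomputable def termAboveHyperbola (G : ℝ) (p : ℕ × ℕ) : ℝ :=
  if G ≤ (p.1 : ℝ) * p.2 then oneDivMulSucc p.1 * oneDivMulSucc p.2 else 0

lemma termAboveHyperbola_nonneg (G : ℝ) (p : ℕ × ℕ) : 0 ≤ termAboveHyperbola G p := by
  unfold termAboveHyperbola
  split_ifs
  exacts [mul_nonneg (oneDivMulSucc_nonneg _) (oneDivMulSucc_nonneg _), le_rfl]

lemma termAboveHyperbola_le (G : ℝ) (p : ℕ × ℕ) :
    termAboveHyperbola G p ≤ oneDivMulSucc p.1 * oneDivMulSucc p.2 := by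
  unfold termAboveHyperbola
  split_ifs
  exacts [le_rfl, mul_nonneg (oneDivMulSucc_nonneg _) (oneDivMulSucc_nonneg _)]

lemma summable_termAboveHyperbola (G : ℝ) : Summable (termAboveHyperbola G) :=
  .of_nonneg_of_le (termAboveHyperbola_nonneg G) (termAboveHyperbola_le G)
    (hasSum_oneDivMulSucc.summable.mul_of_nonneg hasSum_oneDivMulSucc.summable
      oneDivMulSucc_nonneg oneDivMulSucc_nonneg)

lemma tsum_termAboveHyperbola_slice {G : ℝ} (hG : 0 < G) (a : ℕ) :
    ∑' b, termAboveHyperbola G (a, b) = oneDivMulSucc a / ⌈G / a⌉₊ := by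
  rcases eq_or_ne a 0 with rfl | ha
  · simp [termAboveHyperbola]
  have hcond (b : ℕ) : G ≤ (a : ℝ) * b ↔ ⌈G / a⌉₊ ≤ b := by
    rw [Nat.ceil_le, div_le_iff₀' (by positivity)]
  have hceil : ⌈G / a⌉₊ ≠ 0 := (Nat.ceil_pos.mpr (by positivity)).ne'
  simp_rw [termAboveHyperbola, hcond, ← mul_ite_zero (α := ℝ), tsum_mul_left,
    tsum_ite_le_oneDivMulSucc hceil, mul_one_div]

lemma tsum_termAboveHyperbola {G : ℝ} (hG : 0 < G) :
    ∑' p, termAboveHyperbola G p = ∑' a : ℕ, oneDivMulSucc a / ⌈G / a⌉₊ := by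
  have h := summable_termAboveHyperbola G
  rw [h.tsum_prod' h.prod_factor]
  simp_rw [tsum_termAboveHyperbola_slice hG]

lemma oneDivMulSucc_div_natCast_le (a m : ℕ) : oneDivMulSucc a / m ≤ oneDivMulSucc a := by
  rcases eq_or_ne m 0 with rfl | hm
  · simpa using oneDivMulSucc_nonneg a
  · exact div_le_self (oneDivMulSucc_nonneg a) (mod_cast Nat.one_le_iff_ne_zero.mpr hm)

section CeilBounds

variable {G : ℝ} {a : ℕ}

lemma oneDivMulSucc_div_ceil_le (hG : 0 < G) (ha : a ≠ 0) :
    oneDivMulSucc a / ⌈G / a⌉₊ ≤ 1 / (G * a) := by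
  have ha' : (0 : ℝ) < a := by positivity
  have hceil : G ≤ ⌈G / a⌉₊ * a := (div_le_iff₀ ha').mp (Nat.le_ceil _)
  rw [oneDivMulSucc, div_div, one_div_le_one_div (by positivity) (by positivity)]
  nlinarith

lemma le_oneDivMulSucc_div_ceil (hG : 0 < G) (ha : a ≠ 0) (haG : a ≤ G) :
    1 / (4 * G * a) ≤ oneDivMulSucc a / ⌈G / a⌉₊ := by
  have ha' : (1 : ℝ) ≤ a := mod_cast Nat.one_le_iff_ne_zero.mpr ha
  have hceil : ⌈G / a⌉₊ * a < G + a := by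
    have := Nat.ceil_lt_add_one (by positivity : 0 ≤ G / a)
    rwa [← lt_div_iff₀ (by positivity), add_div, div_self (by positivity)]
  have hceil_pos : (0 : ℝ) < ⌈G / a⌉₊ := mod_cast Nat.ceil_pos.mpr (by positivity)
  rw [oneDivMulSucc, div_div, one_div_le_one_div (by positivity) (by positivity)]
  nlinarith

end CeilBounds

lemma sum_range_one_div_mul_succ (c : ℝ) (K : ℕ) :
    ∑ i ∈ range K, 1 / (c * (i + 1 : ℕ)) = harmonic K / c := by
  rw [harmonic, Rat.cast_sum, sum_div]
  refine sum_congr rfl fun i _ ↦ ?_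
  push_cast
  field_simp

section Sum

variable {G : ℝ}

lemma summable_oneDivMulSucc_div_ceil (G : ℝ) :
    Summable fun a : ℕ ↦ oneDivMulSucc a / ⌈G / a⌉₊ :=
  .of_nonneg_of_le (fun a ↦ div_nonneg (oneDivMulSucc_nonneg a) (Nat.cast_nonneg _))
    (fun a ↦ oneDivMulSucc_div_natCast_le a _) hasSum_oneDivMulSucc.summable

lemma tsum_oneDivMulSucc_div_ceil_le (hG : 1 ≤ G) :
    ∑' a : ℕ, oneDivMulSucc a / ⌈G / a⌉₊ ≤ (2 + log G) / G := by
  have hG0 : 0 < G := by linarith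
  set K := ⌊G⌋₊
  rw [← (summable_oneDivMulSucc_div_ceil G).sum_add_tsum_nat_add (K + 1), sum_range_succ']
  have head : ∑ i ∈ range K, oneDivMulSucc (i + 1) / ⌈G / (i + 1 : ℕ)⌉₊ ≤ (1 + log G) / G := by
    calc _ ≤ ∑ i ∈ range K, 1 / (G * (i + 1 : ℕ)) :=
          sum_le_sum fun i _ ↦ oneDivMulSucc_div_ceil_le hG0 i.succ_ne_zero
      _ = harmonic K / G := sum_range_one_div_mul_succ G K
      _ ≤ (1 + log G) / G := by gcongr; exact harmonic_floor_le_one_add_log G hG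
  have tail : ∑' i, oneDivMulSucc (i + (K + 1)) / ⌈G / (i + (K + 1) : ℕ)⌉₊ ≤ 1 / G := by
    calc _ ≤ ∑' i, oneDivMulSucc (i + (K + 1)) :=
          ((summable_nat_add_iff (K + 1)).mpr (summable_oneDivMulSucc_div_ceil G)).tsum_le_tsum
            (fun i ↦ oneDivMulSucc_div_natCast_le _ _)
            (hasSum_oneDivMulSucc_nat_add K.succ_ne_zero).summable
      _ = 1 / (K + 1 : ℕ) := (hasSum_oneDivMulSucc_nat_add K.succ_ne_zero).tsum_eq
      _ ≤ 1 / G := by gcongr; push_cast; exact (Nat.lt_floor_add_one G).le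
  simp only [oneDivMulSucc_zero, zero_div, add_zero]
  linarith [show (2 + log G) / G = (1 + log G) / G + 1 / G by ring]

lemma log_div_le_tsum_oneDivMulSucc_div_ceil (hG : 1 ≤ G) :
    log G / (4 * G) ≤ ∑' a : ℕ, oneDivMulSucc a / ⌈G / a⌉₊ := by
  have hG0 : 0 < G := by linarith
  set K := ⌊G⌋₊
  calc log G / (4 * G) ≤ harmonic K / (4 * G) := by
        gcongr; exact log_le_harmonic_floor G hG0.le
    _ = ∑ i ∈ range K, 1 / (4 * G * (i + 1 : ℕ)) := (sum_range_one_div_mul_succ _ K).symm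
    _ ≤ ∑ i ∈ range K, oneDivMulSucc (i + 1) / ⌈G / (i + 1 : ℕ)⌉₊ := by
        refine sum_le_sum fun i hi ↦ le_oneDivMulSucc_div_ceil hG0 i.succ_ne_zero ?_
        exact (Nat.le_floor_iff hG0.le).mp (mem_range.mp hi)
    _ ≤ ∑' i, oneDivMulSucc (i + 1) / ⌈G / (i + 1 : ℕ)⌉₊ :=
        ((summable_nat_add_iff 1).mpr (summable_oneDivMulSucc_div_ceil G)).sum_le_tsum _
          fun i _ ↦ div_nonneg (oneDivMulSucc_nonneg _) (Nat.cast_nonneg _)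
    _ = ∑' a : ℕ, oneDivMulSucc a / ⌈G / a⌉₊ := by
        simp [(summable_oneDivMulSucc_div_ceil G).tsum_eq_zero_add]

end Sum

lemma tsum_pnat_prod_eq_tsum {α : Type*} [AddCommMonoid α] [TopologicalSpace α]
    {f : ℕ × ℕ → α} (hf₁ : ∀ b, f (0, b) = 0) (hf₂ : ∀ a, f (a, 0) = 0) :
    ∑' p : ℕ+ × ℕ+, f (p.1, p.2) = ∑' p, f p := by
  refine (PNat.coe_injective.prodMap PNat.coe_injective).tsum_eq fun ⟨a, b⟩ hab ↦ ?_
  have ha : a ≠ 0 := by rintro rfl; exact hab (hf₁ b)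
  have hb : b ≠ 0 := by rintro rfl; exact hab (hf₂ a)
  exact ⟨(⟨a, Nat.pos_of_ne_zero ha⟩, ⟨b, Nat.pos_of_ne_zero hb⟩), rfl⟩

theorem stmt_1 (t : ℝ) (ht : 0 < t) :
    ∃ c1 c2 : ℝ, 0 < c1 ∧ 0 < c2 ∧ ∀ g : ℝ, 2 ≤ g →
      c1 * Real.log g * g ^ (-(1 / t)) ≤
        (∑' p : ℕ+ × ℕ+, if g ≤ ((p.1 : ℝ)) ^ t * ((p.2 : ℝ)) ^ t then
            1 / ((p.1 : ℝ) * ((p.1 : ℝ) + 1)) * (1 / ((p.2 : ℝ) * ((p.2 : ℝ) + 1))) else 0) ∧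
      (∑' p : ℕ+ × ℕ+, if g ≤ ((p.1 : ℝ)) ^ t * ((p.2 : ℝ)) ^ t then
            1 / ((p.1 : ℝ) * ((p.1 : ℝ) + 1)) * (1 / ((p.2 : ℝ) * ((p.2 : ℝ) + 1))) else 0)
          ≤ c2 * Real.log g * g ^ (-(1 / t)) := by
  refine ⟨1 / (4 * t), 2 / log 2 + 1 / t, by positivity, by positivity, fun g hg ↦ ?_⟩
  have hg0 : 0 < g := by linarith
  set G := g ^ (1 / t) with hG
  have hG1 : 1 ≤ G := one_le_rpow (by linarith) (by positivity)
  have hlog : log g = t * log G := by rw [hG, log_rpow hg0]; field_simp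
  have hpow : g ^ (-(1 / t)) = 1 / G := by rw [rpow_neg hg0.le, one_div G]
  have hsum : (∑' p : ℕ+ × ℕ+, if g ≤ ((p.1 : ℝ)) ^ t * ((p.2 : ℝ)) ^ t then
      1 / ((p.1 : ℝ) * ((p.1 : ℝ) + 1)) * (1 / ((p.2 : ℝ) * ((p.2 : ℝ) + 1))) else 0)
        = ∑' a : ℕ, oneDivMulSucc a / ⌈G / a⌉₊ := by
    rw [← tsum_termAboveHyperbola (by positivity),
      ← tsum_pnat_prod_eq_tsum (by simp [termAboveHyperbola]) (by simp [termAboveHyperbola])]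
    refine tsum_congr fun p ↦ ?_
    have hcond : g ≤ (p.1 : ℝ) ^ t * (p.2 : ℝ) ^ t ↔ G ≤ (p.1 : ℝ) * p.2 := by
      rw [← mul_rpow (by positivity) (by positivity), hG, one_div,
        rpow_inv_le_iff_of_pos hg0.le (by positivity) ht]
    simp only [termAboveHyperbola, hcond, oneDivMulSucc]
  rw [hsum, hpow]
  constructor
  · calc 1 / (4 * t) * log g * (1 / G) = log G / (4 * G) := by
          rw [hlog]; field_simp
      _ ≤ _ := log_div_le_tsum_oneDivMulSucc_div_ceil hG1
  · have hlog2 : log 2 ≤ log g := log_le_log (by norm_num) hg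
    calc _ ≤ (2 + log G) / G := tsum_oneDivMulSucc_div_ceil_le hG1
      _ ≤ (2 * (log g / log 2) + log G) / G := by
          gcongr
          exact le_mul_of_one_le_right (by norm_num) ((one_le_div (by positivity)).mpr hlog2)
      _ = (2 / log 2 + 1 / t) * log g * (1 / G) := by rw [hlog]; field_simp
end

section
/- With the continued fraction denominators q_n defined by the standard recursion from positive integers a_1, …, a_n, b_1, …, b_m, one has q_n(a_1,…,a_n)·q_m(b_1,…,b_m) ≤ q_{n+m}(a_1,…,a_n,b_1,…,b_m) ≤ 2·q_n(a_1,…,a_n)·q_m(b_1,…,b_m). -/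
def cfDen (a : ℕ → ℕ) : ℕ → ℕ
  | 0 => 1
  | 1 => a 1
  | n + 2 => a (n + 2) * cfDen a (n + 1) + cfDen a n

lemma cfDen_congr {a b : ℕ → ℕ} :
    ∀ k, (∀ i, 1 ≤ i → i ≤ k → a i = b i) → cfDen a k = cfDen b k := by
  intro k
  induction k using Nat.strong_induction_on with
  | _ k ih =>
    match k with
    | 0 => intro _; rfl
    | 1 => intro h; simp only [cfDen]; exact h 1 le_rfl le_rfl
    | k + 2 =>
      intro h
      simp only [cfDen]
      rw [ih (k + 1) (by omega) (fun i h1 h2 => h i h1 (by omega)),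
        ih k (by omega) (fun i h1 h2 => h i h1 (by omega)),
        h (k + 2) (by omega) le_rfl]

lemma cfDen_pos (a : ℕ → ℕ) (ha : ∀ i, 1 ≤ a i) : ∀ k, 1 ≤ cfDen a k := by
  intro k
  induction k using Nat.strong_induction_on with
  | _ k ih =>
    match k with
    | 0 => exact le_rfl
    | 1 => exact ha 1
    | k + 2 =>
      have h1 := ih (k + 1) (by omega)
      calc 1 ≤ cfDen a (k+1) := h1
        _ ≤ a (k+2) * cfDen a (k+1) + cfDen a k := by nlinarith [ha (k+2)]
        _ = cfDen a (k+2) := rfl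

lemma cfDen_mono (a : ℕ → ℕ) (ha : ∀ i, 1 ≤ a i) (k : ℕ) :
    cfDen a k ≤ cfDen a (k + 1) := by
  match k with
  | 0 => exact ha 1
  | 1 => show cfDen a 1 ≤ a 2 * cfDen a 1 + cfDen a 0
         nlinarith [ha 2]
  | k + 2 => show cfDen a (k+2) ≤ a (k+3) * cfDen a (k+2) + cfDen a (k+1)
             nlinarith [ha (k+3)]

lemma cfDen_shift_le (b : ℕ → ℕ) (hb : ∀ i, 1 ≤ b i) :
    ∀ m, cfDen (fun i => b (i + 1)) m ≤ cfDen b (m + 1) := by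
  intro m
  induction m using Nat.strong_induction_on with
  | _ m ih =>
    match m with
    | 0 => exact hb 1
    | 1 =>
      show b 2 ≤ b 2 * b 1 + 1
      nlinarith [hb 1, hb 2]
    | m + 2 =>
      have h1 := ih (m + 1) (by omega)
      have h2 := ih m (by omega)
      show b (m + 3) * cfDen (fun i => b (i+1)) (m+1) + cfDen (fun i => b (i+1)) m ≤
        b (m + 3) * cfDen b (m + 2) + cfDen b (m + 1)
      have := hb (m + 3)
      nlinarith

lemma cfDen_concat (a b : ℕ → ℕ) (n : ℕ) :
    ∀ m, cfDen (fun i => if i ≤ n + 1 then a i else b (i - (n + 1))) (n + 1 + (m + 1)) =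
      cfDen a (n + 1) * cfDen b (m + 1) + cfDen a n * cfDen (fun i => b (i + 1)) m := by
  set f := fun i => if i ≤ n + 1 then a i else b (i - (n + 1)) with hf
  have hfn : ∀ k, k ≤ n + 1 → cfDen f k = cfDen a k := by
    intro k hk
    exact cfDen_congr k (fun i h1 h2 => by simp [hf, show i ≤ n + 1 by omega])
  have hfv : ∀ j, 1 ≤ j → f (n + 1 + j) = b j := by
    intro j hj
    simp only [hf]
    rw [if_neg (by omega)]
    congr 1
    omega
  intro m
  induction m using Nat.strong_induction_on with
  | _ m ih =>
    match m with
    | 0 =>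
      show f (n + 2) * cfDen f (n + 1) + cfDen f n =
        cfDen a (n + 1) * cfDen b 1 + cfDen a n * 1
      rw [hfn (n + 1) le_rfl, hfn n (by omega),
        show n + 2 = n + 1 + 1 from rfl, hfv 1 le_rfl]
      show b 1 * cfDen a (n + 1) + cfDen a n = cfDen a (n + 1) * b 1 + cfDen a n * 1
      ring
    | 1 =>
      show f (n + 3) * cfDen f (n + 2) + cfDen f (n + 1) =
        cfDen a (n + 1) * cfDen b 2 + cfDen a n * cfDen (fun i => b (i + 1)) 1
      have h0 := ih 0 (by omega)
      rw [show n + 3 = n + 1 + 2 from rfl, hfv 2 (by omega)]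
      have h0' : cfDen f (n + 2) = cfDen a (n + 1) * cfDen b 1 + cfDen a n * 1 := h0
      rw [h0', hfn (n + 1) le_rfl]
      show b 2 * (cfDen a (n + 1) * cfDen b 1 + cfDen a n * 1) + cfDen a (n + 1) =
        cfDen a (n + 1) * (b 2 * cfDen b 1 + cfDen b 0) + cfDen a n * b 2
      show b 2 * (cfDen a (n + 1) * b 1 + cfDen a n * 1) + cfDen a (n + 1) =
        cfDen a (n + 1) * (b 2 * b 1 + 1) + cfDen a n * b 2
      ring
    | m + 2 =>
      have h1 := ih (m + 1) (by omega)
      have h2 := ih m (by omega)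
      have hk : n + 1 + (m + 2 + 1) = (n + 1 + (m + 1) + 1) + 1 := by ring
      show f (n + 1 + (m + 2 + 1)) * cfDen f (n + 1 + (m + 1) + 1) + cfDen f (n + 1 + (m + 1)) =
        cfDen a (n + 1) * cfDen b (m + 3) + cfDen a n * cfDen (fun i => b (i + 1)) (m + 2)
      rw [hfv (m + 3) (by omega) ]
      rw [show n + 1 + (m + 1) + 1 = n + 1 + (m + 1 + 1) by ring, h1, h2]
      show b (m + 3) * (cfDen a (n + 1) * cfDen b (m + 2) + cfDen a n * cfDen (fun i => b (i + 1)) (m + 1)) +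
          (cfDen a (n + 1) * cfDen b (m + 1) + cfDen a n * cfDen (fun i => b (i + 1)) m) =
        cfDen a (n + 1) * (b (m + 3) * cfDen b (m + 2) + cfDen b (m + 1)) +
          cfDen a n * (b (m + 3) * cfDen (fun i => b (i + 1)) (m + 1) + cfDen (fun i => b (i + 1)) m)
      ring

theorem stmt_8 (a b : ℕ → ℕ) (ha : ∀ i, 1 ≤ a i) (hb : ∀ i, 1 ≤ b i) (n m : ℕ) :
    cfDen a n * cfDen b m ≤ cfDen (fun i => if i ≤ n then a i else b (i - n)) (n + m) ∧
    cfDen (fun i => if i ≤ n then a i else b (i - n)) (n + m) ≤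
      2 * (cfDen a n * cfDen b m) := by
  match n, m with
  | 0, m =>
    have h : cfDen (fun i => if i ≤ 0 then a i else b (i - 0)) (0 + m) = cfDen b m := by
      rw [Nat.zero_add]
      exact cfDen_congr m (fun i h1 h2 => by simp [Nat.not_le.mpr h1, show ¬ i ≤ 0 by omega])
    rw [h]
    show 1 * cfDen b m ≤ cfDen b m ∧ cfDen b m ≤ 2 * (1 * cfDen b m)
    omega
  | n + 1, 0 =>
    have h : cfDen (fun i => if i ≤ n + 1 then a i else b (i - (n + 1))) (n + 1 + 0) =
        cfDen a (n + 1) := by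
      rw [Nat.add_zero]
      exact cfDen_congr (n + 1) (fun i h1 h2 => by simp [h2])
    rw [h]
    show cfDen a (n+1) * 1 ≤ cfDen a (n+1) ∧ cfDen a (n+1) ≤ 2 * (cfDen a (n+1) * 1)
    omega
  | n + 1, m + 1 =>
    rw [cfDen_concat a b n m]
    constructor
    · exact Nat.le_add_right _ _
    · have h1 : cfDen a n ≤ cfDen a (n + 1) := cfDen_mono a ha n
      have h2 : cfDen (fun i => b (i + 1)) m ≤ cfDen b (m + 1) :=
        cfDen_shift_le b hb m
      have h3 : cfDen a n * cfDen (fun i => b (i + 1)) m ≤ cfDen a (n + 1) * cfDen b (m + 1) :=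
        Nat.mul_le_mul h1 h2
      omega
end
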